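/- arXiv:2510.16011 — 4 statements merged into one kernel-verified Lean document; each statement's English description precedes it below -/
import Mathlib

section
/- Let M̃ = M ×_f ℝ be a static spacetime with metric g̃ = g − f² dt². If (g̃, λ̃, φ̃) is an almost gradient Ricci soliton on M̃, then setting l = ln f, ψ = φ̃|_M − l, and η = dl, the structure (g, ψ, λ̃, −1) is an almost gradient η-Ricci soliton on M: Hess(ψ)(X₁, X₂) + S(X₁, X₂) + λ̃ g(X₁, X₂) − η(X₁)η(X₂) = 0 for all vector fields X₁, X₂ on M. -/
/-- If `(g̃, λ̃, φ̃)` is an almost gradient Ricci soliton on the static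
spacetime `M̃ = M ×_f ℝ`, then with `l = ln f`, `ψ = φ̃|_M - l`, `η = dl`, the structure
`(g, ψ, λ̃, -1)` is an almost gradient η-Ricci soliton on `M`:
`Hess ψ + S + λ̃ g - η ⊗ η = 0`. -/
theorem stmt_1 {M V : Type*}
    (g S Hf gT ST HphiT Hphi Hl Hpsi : V → V → M → ℝ)
    (df eta : V → M → ℝ)
    (f lamT : M → ℝ)
    (hf : ∀ p, 0 < f p)
    (hgT : ∀ X Y p, gT X Y p = g X Y p)
    (hST : ∀ X Y p, ST X Y p = S X Y p - (1 / f p) * Hf X Y p)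
    (hHT : ∀ X Y p, HphiT X Y p = Hphi X Y p)
    -- almost gradient Ricci soliton on M̃, restricted to base vectors
    (hsol : ∀ X Y p, HphiT X Y p + ST X Y p + lamT p * gT X Y p = 0)
    -- the identity (1/f) Hess f = Hess(ln f) + (1/f²) df ⊗ df
    (hident : ∀ X Y p, (1 / f p) * Hf X Y p
      = Hl X Y p + (1 / (f p) ^ 2) * (df X p * df Y p))
    -- η = dl = d(ln f), i.e. η(X) = (1/f) df(X)
    (heta : ∀ X p, eta X p = (1 / f p) * df X p)
    -- Hess ψ = Hess φ - Hess l for ψ = φ - l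
    (hHpsi : ∀ X Y p, Hpsi X Y p = Hphi X Y p - Hl X Y p) :
    ∀ X Y p, Hpsi X Y p + S X Y p + lamT p * g X Y p - eta X p * eta Y p = 0 := by
  intro X Y p
  have h := hsol X Y p
  rw [hHT, hST, hgT] at h
  rw [hHpsi, heta, heta]
  have hfne : f p ≠ 0 := (hf p).ne'
  have hid := hident X Y p
  have e : (1 / f p) * df X p * ((1 / f p) * df Y p)
      = 1 / (f p) ^ 2 * (df X p * df Y p) := by
    rw [pow_two, one_div, one_div, mul_inv]
    ring
  linarith
end

section
/- Let M̃ = M ×_f ℝ be a static perfect fluid spacetime, so that Δf = ((n−2)/(2(n−1)) r + n/(n−1) ρ) f on the n-dimensional base (M, g). If (g̃, λ̃, φ̃) is an almost gradient Ricci soliton on M̃ with Hess(φ̃)(∂_t, ∂_t) = 0, then λ̃ = (n−2)/(2(n−1)) r + n/(n−1) ρ, and equivalently, using the scalar curvature relation r̃ = r − 2Δf/f together with Δf = λ̃ f, one has λ̃ = n ρ + (n/2 − 1) r̃. -/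
/-- On a static perfect fluid spacetime `M̃ = M ×_f ℝ`
(`Δf = ((n-2)/(2(n-1)) r + n/(n-1) ρ) f`), an almost gradient Ricci soliton with
`Hess φ̃(∂_t,∂_t) = 0` has `λ̃ = (n-2)/(2(n-1)) r + n/(n-1) ρ`, and equivalently
(using `r̃ = r - 2Δf/f` and `Δf = λ̃ f`) `λ̃ = n ρ + (n/2 - 1) r̃`. -/
theorem stmt_4 {M : Type*} (n : ℕ) (hn : 2 ≤ n)
    (f Deltaf r rT rho lamT Hphitt : M → ℝ)
    (hf : ∀ p, 0 < f p)
    -- SPF equation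
    (hSPF : ∀ p, Deltaf p
      = (((n : ℝ) - 2) / (2 * ((n : ℝ) - 1)) * r p + (n : ℝ) / ((n : ℝ) - 1) * rho p) * f p)
    -- soliton equation at (∂_t, ∂_t) with S̃(∂_t,∂_t) = f Δf, g̃(∂_t,∂_t) = -f²
    (hsol : ∀ p, Hphitt p + f p * Deltaf p + lamT p * (-(f p) ^ 2) = 0)
    (hH : ∀ p, Hphitt p = 0)
    -- scalar curvature relation for the static spacetime
    (hrT : ∀ p, rT p = r p - 2 * Deltaf p / f p) :
    ∀ p, lamT p = ((n : ℝ) - 2) / (2 * ((n : ℝ) - 1)) * r p + (n : ℝ) / ((n : ℝ) - 1) * rho p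
      ∧ lamT p = (n : ℝ) * rho p + ((n : ℝ) / 2 - 1) * rT p := by
  intro p
  have hfp := (hf p).ne'
  have hn1 : (n : ℝ) - 1 ≠ 0 := by
    have : (2:ℝ) ≤ n := by exact_mod_cast hn
    linarith
  have hlam : Deltaf p = lamT p * f p := by
    have hs := hsol p
    rw [hH p] at hs
    have := mul_left_cancel₀ hfp (show f p * Deltaf p = f p * (lamT p * f p) by nlinarith [hs])
    linarith
  have h1 : lamT p = ((n : ℝ) - 2) / (2 * ((n : ℝ) - 1)) * r p + (n : ℝ) / ((n : ℝ) - 1) * rho p := by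
    have := (hSPF p).symm.trans hlam
    exact (mul_right_cancel₀ hfp this).symm
  refine ⟨h1, ?_⟩
  have hrt2 : rT p = r p - 2 * lamT p := by
    rw [hrT p, hlam]
    field_simp
  rw [hrt2]
  have h1' : lamT p * ((n:ℝ) - 1) = ((n:ℝ) - 2) / 2 * r p + (n:ℝ) * rho p := by
    rw [h1]; field_simp
  linear_combination h1'
end

section
/- Let the n-dimensional base manifold (M, g) of a static perfect fluid spacetime M̃ = M ×_f ℝ admit an almost gradient Ricci soliton with potential function equal to the warping function f: Hess(f) + S + λ g = 0. Then M is Einstein; precisely, S(X₁, X₂) = (1/(f+1)) { (r − 2ρ)/(2(n−1)) · f − λ } g(X₁, X₂) for all vector fields X₁, X₂. -/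
/-! Substituting `Hess f = -S - λ g` from the soliton equation into the first SPF equation
leaves `(f + 1) S = (f r/n - Δf/n - λ) g`, so `S` is pointwise proportional to `g`; the trace
equation for `Δf` turns the coefficient `f r/n - Δf/n` into `(r - 2ρ) f / (2(n-1))`. -/

section FieldAlgebra

variable {K : Type*} [Field K]

theorem one_add_mul_eq_of_spf_of_soliton {f s r d h l g n : K}
    (hspf : f * (s - r / n * g) = h - d / n * g) (hsol : h + s + l * g = 0) :
    (f + 1) * s = (f * r / n - d / n - l) * g := by
  linear_combination hspf + hsol

theorem mul_div_sub_laplacian_div_eq [CharZero K] {n r ρ f d : K} (hn : n ≠ 0) (hn1 : n - 1 ≠ 0)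
    (hd : d = ((n - 2) / (2 * (n - 1)) * r + n / (n - 1) * ρ) * f) :
    f * r / n - d / n = (r - 2 * ρ) / (2 * (n - 1)) * f := by
  subst hd
  field_simp
  ring

end FieldAlgebra

/-- If the `n`-dimensional base `(M,g)` of a static perfect fluid spacetime
admits an almost gradient Ricci soliton with potential equal to the warping function `f`
(`Hess f + S + λ g = 0`), then `M` is Einstein:
`S = (1/(f+1)) { (r - 2ρ)/(2(n-1)) f - λ } g`. -/
theorem stmt_6 {M V : Type*} (n : ℕ) (hn : 2 ≤ n)
    (g S Hf : V → V → M → ℝ)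
    (f Deltaf r rho lam : M → ℝ)
    (hf : ∀ p, 0 < f p)
    -- SPF equations
    (hSPF1 : ∀ X Y p, f p * (S X Y p - r p / (n : ℝ) * g X Y p)
      = Hf X Y p - Deltaf p / (n : ℝ) * g X Y p)
    (hSPF2 : ∀ p, Deltaf p
      = (((n : ℝ) - 2) / (2 * ((n : ℝ) - 1)) * r p + (n : ℝ) / ((n : ℝ) - 1) * rho p) * f p)
    -- almost gradient Ricci soliton with potential f
    (hsol : ∀ X Y p, Hf X Y p + S X Y p + lam p * g X Y p = 0) :
    ∀ X Y p, S X Y p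
      = (1 / (f p + 1)) * ((r p - 2 * rho p) / (2 * ((n : ℝ) - 1)) * f p - lam p) * g X Y p := by
  intro X Y p
  have hn2 : (2 : ℝ) ≤ n := by exact_mod_cast hn
  have hn0 : (n : ℝ) ≠ 0 := by positivity
  have hn1 : (n : ℝ) - 1 ≠ 0 := by linarith
  have hf1 : f p + 1 ≠ 0 := by linarith [hf p]
  have key := one_add_mul_eq_of_spf_of_soliton (hSPF1 X Y p) (hsol X Y p)
  rw [mul_div_sub_laplacian_div_eq hn0 hn1 (hSPF2 p)] at key
  rw [one_div, mul_assoc, eq_inv_mul_iff_mul_eq₀ hf1]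
  exact key
end

section
/- Let the n-dimensional base manifold (M, g) of a static perfect fluid spacetime admit an almost gradient Ricci soliton with potential f, and suppose the basic vector field ξ is a unit torse-forming vector field (∇_X ξ = X + η(X)ξ). Then either η ≡ 0 (ξ is orthogonal to all fields in its pairing), or the soliton function satisfies λ = [(r − 2ρ) f − 2(n−1)²(f+1)] / (2(n−1)). In the stiff matter case ρ = r/2 this gives λ = −(n−1)(f+1) < 0, so the soliton is shrinking. -/
/-- If the base of an SPF spacetime admits an almost gradient Ricci
soliton with potential `f` (giving the Einstein condition) and the basic vector field
`ξ` is unit torse-forming (so `S(X,ξ) = (n-1)η(X)`), then either `η ≡ 0` or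
`λ = [(r - 2ρ)f - 2(n-1)²(f+1)]/(2(n-1))`; in the stiff matter case `ρ = r/2`
this gives `λ = -(n-1)(f+1) < 0` (shrinking). Scalars are evaluated at a point. -/
theorem stmt_10 {V : Type*} (n : ℕ) (hn : 2 ≤ n)
    (g S : V → V → ℝ) (η : V → ℝ) (ξ : V)
    (f r rho lam : ℝ)
    (hf : 0 < f)
    (hη : ∀ X, η X = g X ξ)
    -- Einstein condition from the SPF and soliton equations
    (hE : ∀ X Y, S X Y = (1 / (f + 1)) * ((r - 2 * rho) / (2 * ((n : ℝ) - 1)) * f - lam) * g X Y)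
    -- consequence of the unit torse-forming condition
    (hSξ : ∀ X, S X ξ = ((n : ℝ) - 1) * η X) :
    (∀ X, η X = 0)
    ∨ (lam = ((r - 2 * rho) * f - 2 * ((n : ℝ) - 1) ^ 2 * (f + 1)) / (2 * ((n : ℝ) - 1))
        ∧ (rho = r / 2 → lam = -(((n : ℝ) - 1) * (f + 1)) ∧ lam < 0)) := by
  by_cases h : ∀ X, η X = 0
  · exact Or.inl h
  · right
    push_neg at h
    obtain ⟨X, hX⟩ := h
    have hn1 : (1:ℝ) ≤ (n:ℝ) - 1 := by
      have : (2:ℝ) ≤ (n:ℝ) := by exact_mod_cast hn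
      linarith
    have hn0 : ((n:ℝ) - 1) ≠ 0 := by linarith
    have hf1 : f + 1 ≠ 0 := by linarith
    have key : (1 / (f + 1)) * ((r - 2 * rho) / (2 * ((n : ℝ) - 1)) * f - lam) = (n:ℝ) - 1 := by
      have h1 := hE X ξ
      rw [hSξ X, ← hη X] at h1
      have := mul_right_cancel₀ hX h1.symm
      linarith [this]
    have hlam : lam = ((r - 2 * rho) * f - 2 * ((n : ℝ) - 1) ^ 2 * (f + 1)) / (2 * ((n : ℝ) - 1)) := by
      field_simp at key ⊢
      ring_nf at key ⊢
      linarith [key]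
    refine ⟨hlam, fun hrho => ?_⟩
    have hl2 : lam = -(((n : ℝ) - 1) * (f + 1)) := by
      rw [hlam, hrho]
      field_simp
      ring
    refine ⟨hl2, ?_⟩
    rw [hl2]
    have : 0 < ((n:ℝ) - 1) * (f + 1) := by positivity
    linarith
end
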